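/- arXiv:1510.00306 — 6 statements merged into one kernel-verified Lean document; each statement's English description precedes it below -/
import Mathlib

section
/- Let A be a unital Banach algebra, t > 1, and x ∈ A with ‖1 − tx‖ ≤ 1 and ‖1 − x‖ = 1. Then every norm-one functional f on A with f(1 − x) = 1 satisfies f(1) = 1, i.e., f is a state. -/
/-!
Put `z = f 1`. Since `t • (1 - x) = (1 - t • x) + (t - 1) • 1`, applying `f` gives
`f (1 - t • x) + (t - 1) z = t`, where both `f (1 - t • x)` and `z` lie in the closed unit disc
because `‖f‖ = 1`. Taking real parts forces `re z ≥ 1`, and the only point of the closed unit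
disc with real part at least `1` is `1` itself.
-/

namespace Complex

theorem eq_one_of_norm_le_one_of_one_le_re {z : ℂ} (hz : ‖z‖ ≤ 1) (hre : 1 ≤ z.re) : z = 1 := by
  have hre_eq : z.re = 1 := le_antisymm ((re_le_norm z).trans hz) hre
  have him : z.im = 0 := by
    have hsq := sq_norm_sub_sq_re z
    rw [hre_eq] at hsq
    nlinarith [norm_nonneg z]
  exact ext hre_eq him

/-- `1` is an extreme point of the closed unit disc. -/
theorem eq_one_of_add_mul_eq_one_add {a b : ℂ} {s : ℝ} (hs : 0 < s) (ha : ‖a‖ ≤ 1)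
    (hb : ‖b‖ ≤ 1) (h : a + s * b = 1 + s) : b = 1 := by
  have hre : a.re + s * b.re = 1 + s := by simpa using congrArg re h
  have ha_re : a.re ≤ 1 := (re_le_norm a).trans ha
  exact eq_one_of_norm_le_one_of_one_le_re hb (by nlinarith)

end Complex

theorem stmt7_general {A : Type*} [NormedRing A] [NormedAlgebra ℂ A] [NormOneClass A]
    (t : ℝ) (ht : 1 < t) (x : A)
    (h1 : ‖1 - (t : ℂ) • x‖ ≤ 1)
    (f : A →L[ℂ] ℂ) (hf : ‖f‖ = 1) (hfx : f (1 - x) = 1) :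
    f 1 = 1 := by
  have hf_le : ∀ y, ‖f y‖ ≤ ‖y‖ := fun y => by simpa [hf] using f.le_opNorm y
  have hcomb : f (1 - (t : ℂ) • x) + ((t - 1 : ℝ) : ℂ) * f 1 = 1 + ((t - 1 : ℝ) : ℂ) := by
    rw [map_sub] at hfx
    rw [map_sub, map_smul, smul_eq_mul]
    push_cast
    linear_combination (t : ℂ) * hfx
  exact Complex.eq_one_of_add_mul_eq_one_add (sub_pos.mpr ht) ((hf_le _).trans h1)
    (by simpa using hf_le 1) hcomb

/-- a norm-one functional achieving its norm at 1 − x is a state,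
given ‖1 − tx‖ ≤ 1 for some t > 1 and ‖1 − x‖ = 1. -/
theorem stmt7 {A : Type*} [NormedRing A] [NormedAlgebra ℂ A] [NormOneClass A]
    (t : ℝ) (ht : 1 < t) (x : A)
    (h1 : ‖1 - (t : ℂ) • x‖ ≤ 1) (h2 : ‖1 - x‖ = 1)
    (f : A →L[ℂ] ℂ) (hf : ‖f‖ = 1) (hfx : f (1 - x) = 1) :
    f 1 = 1 :=
  stmt7_general t ht x h1 f hf hfx
end

section
/- Let A be a unital Banach algebra and x ∈ A with ‖1 − tx‖ ≤ 1 for some t > 1, and suppose 0 ∉ W(x) (i.e., no state of A vanishes at x). Then ‖1 − x‖ < 1. -/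
/-!
Since `1 - x = (1 - t⁻¹) • 1 + t⁻¹ • (1 - t • x)` is a convex combination of two elements of the
closed unit ball, `‖1 - x‖ ≤ 1`. If equality held, a Hahn–Banach functional `φ` norming `1 - x`
would send both `1` and `1 - t • x` into the closed unit disc while sending their proper convex
combination to the extreme point `1`; hence `φ 1 = 1`, so `φ` is a state with `φ x = 0`.
-/

lemma ContinuousLinearMap.apply_eq_one_of_apply_combo_eq_one {E : Type*} [NormedAddCommGroup E]
    [NormedSpace ℂ E] {φ : E →L[ℂ] ℂ} (hφ : ‖φ‖ ≤ 1) {u z : E} (hu : ‖u‖ ≤ 1) (hz : ‖z‖ ≤ 1)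
    {a b : ℝ} (ha : 0 < a) (hb : 0 < b) (hab : a + b = 1) (h : φ (a • u + b • z) = 1) :
    φ u = 1 := by
  have hφ_le {v : E} (hv : ‖v‖ ≤ 1) : ‖φ v‖ ≤ 1 :=
    (φ.le_opNorm v).trans (mul_le_one₀ hφ (norm_nonneg v) hv)
  rw [map_add, φ.map_smul_of_tower, φ.map_smul_of_tower] at h
  have hφuz : φ u = φ z := by
    by_contra hne
    exact (norm_combo_lt_of_ne (hφ_le hu) (hφ_le hz) hne ha hb hab).ne (by rw [h, norm_one])
  rwa [← hφuz, ← add_smul, hab, one_smul] at h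

lemma exists_state_apply_eq_zero_of_norm_one_sub_eq_one {A : Type*} [NormedRing A]
    [NormedAlgebra ℂ A] [NormOneClass A] {x z : A} (hx : ‖1 - x‖ = 1) (hz : ‖z‖ ≤ 1)
    {a b : ℝ} (ha : 0 < a) (hb : 0 < b) (hab : a + b = 1) (hxz : 1 - x = a • (1 : A) + b • z) :
    ∃ φ : A →L[ℂ] ℂ, ‖φ‖ = 1 ∧ φ 1 = 1 ∧ φ x = 0 := by
  obtain ⟨φ, hφ, hφx⟩ := exists_dual_vector ℂ (1 - x) (by simp [hx])
  have hφ1 : φ 1 = 1 :=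
    φ.apply_eq_one_of_apply_combo_eq_one hφ.le norm_one.le hz ha hb hab (by simp [← hxz, hφx, hx])
  refine ⟨φ, hφ, hφ1, ?_⟩
  simpa [hφ1, hx] using hφx

/-- if ‖1 − tx‖ ≤ 1 for some t > 1 and no state vanishes at x,
then ‖1 − x‖ < 1. -/
theorem stmt8 {A : Type*} [NormedRing A] [NormedAlgebra ℂ A] [NormOneClass A]
    (x : A) (h : ∃ t : ℝ, 1 < t ∧ ‖1 - (t : ℂ) • x‖ ≤ 1)
    (h0 : ∀ φ : A →L[ℂ] ℂ, ‖φ‖ = 1 → φ 1 = 1 → φ x ≠ 0) :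
    ‖1 - x‖ < 1 := by
  obtain ⟨t, ht, htx⟩ := h
  rw [Complex.coe_smul] at htx
  have hs0 : 0 < t⁻¹ := by positivity
  have hs1 : 0 < 1 - t⁻¹ := sub_pos.2 (inv_lt_one_of_one_lt₀ ht)
  have hcombo : 1 - x = (1 - t⁻¹) • (1 : A) + t⁻¹ • (1 - t • x) := by
    rw [smul_sub, smul_smul, inv_mul_cancel₀ (by positivity), sub_smul, one_smul, one_smul]
    abel
  have hle : ‖1 - x‖ ≤ 1 := by
    simpa [hcombo] using convex_closedBall (0 : A) 1 (by simp) (by simpa using htx) hs1.le hs0.le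
      (sub_add_cancel 1 t⁻¹)
  refine hle.lt_of_ne fun heq => ?_
  obtain ⟨φ, hφ, hφ1, hφx⟩ := exists_state_apply_eq_zero_of_norm_one_sub_eq_one heq htx hs1 hs0
    (sub_add_cancel 1 t⁻¹) hcombo
  exact h0 φ hφ hφ1 hφx
end

section
/- Let a ∈ A be invertible in a unital Banach algebra with Sp(a) ∩ iℝ = ∅, and let S = sign(a), N = (a²)^{1/2}, G₀ = (N−1)(N+1)^{-1}. Define the Newton iterates X₀ = a, X_{k+1} = (X_k + X_k^{-1})/2. Then each X_k is invertible, X_k = (1 − G₀^{2^k})^{-1}(1 + G₀^{2^k})·S for all k ≥ 1, and X_k → S and X_k^{-1} → S in norm; moreover ‖X_{k+1} − S‖ ≤ (1/2)‖X_k^{-1}‖·‖X_k − S‖². -/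
/-!
Since `N` commutes with `a` and `N² = a²`, the element `S = a N⁻¹` is an involution commuting
with `a`, and the Cayley transform `G = (N - 1)(N + 1)⁻¹` satisfies `(1 - G) a = (1 + G) S`.
The Newton step preserves the relation `(1 - g) X = (1 + g) S` after squaring `g`, because
`1 - g² = (1 - g)(1 + g)` and `(1 + g)² + (1 - g)² = 2 (1 + g²)`; hence
`(1 - G^(2^k)) X_k = (1 + G^(2^k)) S` for all `k`. The Cayley transform maps the open right
half-plane into the open unit disc, so every `1 - G^(2^k)` is invertible and, by Gelfand's
formula, `G^(2^k) → 0`, which gives `X_k → S`. The error bound is the identity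
`X_{k+1} - S = ½ X_k⁻¹ (X_k - S)²`.
-/

open Filter Topology

theorem Complex.re_one_add_div_one_sub_nonpos {z : ℂ} (hz : 1 ≤ ‖z‖) :
    ((1 + z) / (1 - z)).re ≤ 0 := by
  have hnorm : 1 ≤ z.re ^ 2 + z.im ^ 2 := by
    have h := Complex.sq_norm z
    rw [Complex.normSq_apply] at h
    nlinarith [norm_nonneg z]
  have hnum : (1 + z.re) * (1 - z.re) + z.im * -z.im ≤ 0 := by nlinarith
  rw [Complex.div_re, ← add_div]
  simpa using div_nonpos_of_nonpos_of_nonneg hnum (Complex.normSq_nonneg _)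

noncomputable def cayley {R : Type*} [Ring R] (x : R) : R := (x - 1) * Ring.inverse (x + 1)

section Algebraic

variable {R : Type*} [Ring R]

theorem cayley_mul_add_one {x : R} (hx : IsUnit (x + 1)) : cayley x * (x + 1) = x - 1 :=
  Ring.inverse_mul_cancel_right _ _ hx

theorem add_one_mul_cayley {x : R} (hx : IsUnit (x + 1)) : (x + 1) * cayley x = x - 1 := by
  rw [cayley, ← mul_assoc, show (x + 1) * (x - 1) = (x - 1) * (x + 1) by noncomm_ring,
    Ring.mul_inverse_cancel_right _ _ hx]

theorem one_sub_cayley_mul_eq {a : R} {u : Rˣ} (hu : IsUnit ((u : R) + 1)) (hau : Commute a u) :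
    (1 - cayley (u : R)) * a = (1 + cayley (u : R)) * (a * ↑u⁻¹) := by
  have hconj : (u : R) * (a * ↑u⁻¹) = a := by
    rw [← mul_assoc, ← hau.eq, Units.mul_inv_cancel_right]
  refine hu.mul_right_inj.mp ?_
  rw [← mul_assoc, ← mul_assoc, mul_sub, mul_add, mul_one, add_one_mul_cayley hu,
    show (u : R) + 1 - (u - 1) = 1 + 1 by abel, show (u : R) + 1 + (u - 1) = u + u by abel,
    add_mul, add_mul, one_mul, hconj]

theorem mul_units_inv_mul_self {a : R} {u : Rˣ} (hau : Commute a u) (h : a * a = u * u) :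
    a * ↑u⁻¹ * (a * ↑u⁻¹) = 1 := by
  rw [mul_assoc, ← mul_assoc _ a, ← hau.units_inv_right.eq, mul_assoc, ← mul_assoc, h,
    mul_assoc, Units.mul_inv_cancel_left, Units.mul_inv]

theorem isUnit_one_add_of_isUnit_one_sub_sq {y : R} (h : IsUnit (1 - y ^ 2)) :
    IsUnit (1 + y) := by
  have hcomm : Commute (1 - y) (1 + y) := by
    show (1 - y) * (1 + y) = (1 + y) * (1 - y)
    noncomm_ring
  rw [show 1 - y ^ 2 = (1 - y) * (1 + y) by noncomm_ring] at h
  exact (hcomm.isUnit_mul_iff.mp h).2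

theorem Ring.inverse_eq_self_of_mul_self_eq_one {s : R} (hs : s * s = 1) :
    Ring.inverse s = s :=
  Ring.inverse_unit ⟨s, s, hs, hs⟩

end Algebraic

section Spectrum

variable {A : Type*} [Ring A] [Algebra ℂ A] {x : A}

theorem isUnit_add_one_of_forall_re_pos (hx : ∀ z ∈ spectrum ℂ x, 0 < z.re) :
    IsUnit (x + 1) := by
  have h : (-1 : ℂ) ∉ spectrum ℂ x := fun h => (hx _ h).not_ge (by norm_num)
  rwa [spectrum.notMem_iff, map_neg, map_one, ← neg_add', IsUnit.neg_iff, add_comm] at h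

theorem norm_lt_one_of_mem_spectrum_cayley (hx : ∀ z ∈ spectrum ℂ x, 0 < z.re) :
    ∀ z ∈ spectrum ℂ (cayley x), ‖z‖ < 1 := by
  have hx1 := isUnit_add_one_of_forall_re_pos hx
  intro z hz
  by_contra! hz1
  refine hz ((Units.isUnit_mul_units _ hx1.unit).mp ?_)
  have key : (algebraMap ℂ A z - cayley x) * ↑hx1.unit = (z - 1) • x + (z + 1) • 1 := by
    rw [IsUnit.unit_spec, sub_mul, cayley_mul_add_one hx1, Algebra.algebraMap_eq_smul_one,
      smul_one_mul, smul_add, sub_smul, add_smul, one_smul, one_smul]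
    abel
  rw [key]
  rcases eq_or_ne z 1 with rfl | hz_ne
  · rw [sub_self, zero_smul, zero_add, ← Algebra.algebraMap_eq_smul_one]
    exact (isUnit_iff_ne_zero.mpr (by norm_num)).map _
  · have hz_sub : 1 - z ≠ 0 := sub_ne_zero.mpr hz_ne.symm
    -- `z` is the Cayley transform of `w`, and `w` lies in the closed left half-plane
    set w := (1 + z) / (1 - z)
    have hw : w ∉ spectrum ℂ x := fun hw =>
      (hx w hw).not_ge (Complex.re_one_add_div_one_sub_nonpos hz1)
    have hzw : (1 - z) * w = 1 + z := mul_div_cancel₀ _ hz_sub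
    have hfactor : (z - 1) • x + (z + 1) • 1 = (1 - z) • (algebraMap ℂ A w - x) := by
      rw [Algebra.algebraMap_eq_smul_one, smul_sub, smul_smul, hzw]
      module
    rw [hfactor, Algebra.smul_def]
    exact ((isUnit_iff_ne_zero.mpr hz_sub).map _).mul (spectrum.notMem_iff.mp hw)

end Spectrum

section Banach

variable {A : Type*} [NormedRing A] [NormedAlgebra ℂ A] [CompleteSpace A] {x : A}

theorem tendsto_pow_atTop_nhds_zero_of_spectralRadius_lt_one
    (h : spectralRadius ℂ x < 1) : Tendsto (x ^ ·) atTop (𝓝 0) := by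
  obtain ⟨r, hxr, hr1⟩ := ENNReal.lt_iff_exists_nnreal_btwn.mp h
  have hbound : ∀ᶠ n : ℕ in atTop, ‖x ^ n‖ ≤ (r : ℝ) ^ n := by
    filter_upwards [(spectrum.pow_nnnorm_pow_one_div_tendsto_nhds_spectralRadius x).eventually_lt_const
      hxr, eventually_ne_atTop 0] with n hn hn0
    rw [one_div, ENNReal.rpow_inv_lt_iff (by positivity), ENNReal.rpow_natCast] at hn
    exact_mod_cast hn.le
  exact squeeze_zero_norm' hbound
    (tendsto_pow_atTop_nhds_zero_of_lt_one r.coe_nonneg (by exact_mod_cast hr1))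

theorem spectralRadius_lt_one_of_forall_norm_lt_one (h : ∀ z ∈ spectrum ℂ x, ‖z‖ < 1) :
    spectralRadius ℂ x < 1 := by
  cases subsingleton_or_nontrivial A
  · simp [spectralRadius, spectrum.of_subsingleton]
  · exact_mod_cast spectrum.spectralRadius_lt_of_forall_lt x fun z hz => by
      exact_mod_cast h z hz

theorem isUnit_one_sub_pow_of_forall_norm_lt_one (h : ∀ z ∈ spectrum ℂ x, ‖z‖ < 1) {n : ℕ}
    (hn : n ≠ 0) : IsUnit (1 - x ^ n) := by
  cases subsingleton_or_nontrivial A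
  · exact isUnit_of_subsingleton _
  · have h1 : (1 : ℂ) ∉ spectrum ℂ (x ^ n) := by
      intro h1
      obtain ⟨w, hw, hwn : w ^ n = 1⟩ := (spectrum.map_pow x n ▸ h1 :)
      have hlt := pow_lt_one₀ (norm_nonneg w) (h w hw) hn
      rw [← norm_pow, hwn, norm_one] at hlt
      exact hlt.false
    simpa using spectrum.notMem_iff.mp h1

end Banach

theorem tendsto_inverse_one_sub_mul_one_add_mul {A ι : Type*} [NormedRing A] [CompleteSpace A]
    {l : Filter ι} {f : ι → A} (hf : Tendsto f l (𝓝 0)) (s : A) :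
    Tendsto (fun i => Ring.inverse (1 - f i) * (1 + f i) * s) l (𝓝 s) := by
  have : ContinuousAt (fun y : A => Ring.inverse (1 - y) * (1 + y) * s) 0 := by
    refine ((ContinuousAt.comp (g := Ring.inverse) ?_ (by fun_prop)).mul (by fun_prop)).mul
      (by fun_prop)
    simpa using NormedRing.inverse_continuousAt (1 : Aˣ)
  simpa [Function.comp_def] using this.tendsto.comp hf

section Newton

variable (𝕜 : Type*) {R : Type*} [Field 𝕜] [Ring R] [Algebra 𝕜 R]

noncomputable def newtonSign (x : R) : ℕ → R
  | 0 => x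
  | k + 1 => (2 : 𝕜)⁻¹ • (newtonSign x k + Ring.inverse (newtonSign x k))

variable {𝕜} [NeZero (2 : 𝕜)] {S X g : R}

theorem newton_step_sub_eq (hS : S * S = 1) (hX : IsUnit X) (hXS : Commute X S) :
    (2 : 𝕜)⁻¹ • (X + Ring.inverse X) - S = (2 : 𝕜)⁻¹ • (Ring.inverse X * (X - S) ^ 2) := by
  have hsq : (X - S) ^ 2 = X * (X - S - S) + 1 := by
    rw [← hS, sq, sub_mul, mul_sub, mul_sub, ← hXS.eq]
    noncomm_ring
  rw [hsq, mul_add, Ring.inverse_mul_cancel_left _ _ hX, mul_one]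
  match_scalars <;> field_simp; ring

theorem one_sub_sq_mul_newton_step (hS : S * S = 1) (hX : IsUnit X) (hXS : Commute X S)
    (h : (1 - g) * X = (1 + g) * S) :
    (1 - g ^ 2) * ((2 : 𝕜)⁻¹ • (X + Ring.inverse X)) = (1 + g ^ 2) * S := by
  have hX' : (1 - g ^ 2) * X = (1 + g) * (1 + g) * S := by
    rw [show 1 - g ^ 2 = (1 + g) * (1 - g) by noncomm_ring, mul_assoc, h, mul_assoc]
  have hXinv : (1 - g ^ 2) * Ring.inverse X = (1 - g) * (1 - g) * S := by
    have hv : 1 + g = (1 - g) * X * S := by rw [h, mul_assoc, hS, mul_one]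
    rw [show 1 - g ^ 2 = (1 - g) * (1 + g) by noncomm_ring, hv, mul_assoc (1 - g) X, hXS.eq]
    simp only [mul_assoc]
    rw [Ring.mul_inverse_cancel _ hX, mul_one]
  have hsum : (1 + g) * (1 + g) * S + (1 - g) * (1 - g) * S = (2 : 𝕜) • ((1 + g ^ 2) * S) := by
    rw [two_smul]
    noncomm_ring
  rw [mul_smul_comm, mul_add, hX', hXinv, hsum, smul_smul, inv_mul_cancel₀ two_ne_zero, one_smul]

theorem newtonSign_spec (hS : S * S = 1) (hX : IsUnit X) (hXS : Commute X S)
    (h : (1 - g) * X = (1 + g) * S) (hg : ∀ k, IsUnit (1 - g ^ 2 ^ k)) (k : ℕ) :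
    IsUnit (newtonSign 𝕜 X k) ∧ Commute (newtonSign 𝕜 X k) S ∧
      (1 - g ^ 2 ^ k) * newtonSign 𝕜 X k = (1 + g ^ 2 ^ k) * S := by
  induction k with
  | zero => simpa [newtonSign] using ⟨hX, hXS, h⟩
  | succ k ih =>
    obtain ⟨hXk, hXkS, hk⟩ := ih
    have hstep := one_sub_sq_mul_newton_step (𝕜 := 𝕜) hS hXk hXkS hk
    rw [← pow_mul, ← pow_succ] at hstep
    have hform : newtonSign 𝕜 X (k + 1) =
        Ring.inverse (1 - g ^ 2 ^ (k + 1)) * ((1 + g ^ 2 ^ (k + 1)) * S) :=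
      ((Ring.inverse_mul_eq_iff_eq_mul _ _ _ (hg (k + 1))).mpr hstep.symm).symm
    have hv : IsUnit (1 + g ^ 2 ^ (k + 1)) := by
      refine isUnit_one_add_of_isUnit_one_sub_sq ?_
      rw [← pow_mul, ← pow_succ]
      exact hg (k + 2)
    have hSu : IsUnit S := ⟨⟨S, S, hS, hS⟩, rfl⟩
    refine ⟨hform ▸ (hg (k + 1)).ringInverse.mul (hv.mul hSu), ?_, hstep⟩
    have hinvS : Commute (Ring.inverse (newtonSign 𝕜 X k)) S := by
      simpa [Ring.inverse_eq_self_of_mul_self_eq_one hS] using hXkS.ringInverse_ringInverse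
    exact (hXkS.add_left hinvS).smul_left _

end Newton

theorem norm_newton_step_sub_le {𝕜 R : Type*} [RCLike 𝕜] [NormedRing R] [NormedAlgebra 𝕜 R]
    {S X : R} (hS : S * S = 1) (hX : IsUnit X) (hXS : Commute X S) :
    ‖(2 : 𝕜)⁻¹ • (X + Ring.inverse X) - S‖ ≤ 2⁻¹ * ‖Ring.inverse X‖ * ‖X - S‖ ^ 2 := by
  rw [newton_step_sub_eq hS hX hXS, norm_smul, mul_assoc]
  gcongr
  · simp
  · calc ‖Ring.inverse X * (X - S) ^ 2‖ ≤ ‖Ring.inverse X‖ * ‖(X - S) ^ 2‖ := norm_mul_le _ _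
      _ ≤ ‖Ring.inverse X‖ * ‖X - S‖ ^ 2 := by gcongr; exact norm_pow_le' _ two_pos

theorem stmt13_general {A : Type*} [NormedRing A] [NormedAlgebra ℂ A] [CompleteSpace A]
    (a : Aˣ) (N : Aˣ) (hN2 : (N : A) * N = (a : A) * a) (hcomm : (a : A) * N = (N : A) * a)
    (hNspec : ∀ z ∈ spectrum ℂ (N : A), 0 < z.re) :
    let S : A := (a : A) * (↑N⁻¹ : A)
    let G : A := ((N : A) - 1) * Ring.inverse ((N : A) + 1)
    ∃ X : ℕ → A, X 0 = (a : A) ∧ (∀ k, IsUnit (X k)) ∧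
      (∀ k, X (k + 1) = (2 : ℂ)⁻¹ • (X k + Ring.inverse (X k))) ∧
      (∀ k, 1 ≤ k → IsUnit (1 - G ^ (2 ^ k)) ∧
        X k = Ring.inverse (1 - G ^ (2 ^ k)) * (1 + G ^ (2 ^ k)) * S) ∧
      Filter.Tendsto X atTop (nhds S) ∧
      Filter.Tendsto (fun k => Ring.inverse (X k)) atTop (nhds S) ∧
      (∀ k, ‖X (k + 1) - S‖ ≤ (2 : ℝ)⁻¹ * ‖Ring.inverse (X k)‖ * ‖X k - S‖ ^ 2) := by
  intro S G
  have hG : ∀ z ∈ spectrum ℂ G, ‖z‖ < 1 := norm_lt_one_of_mem_spectrum_cayley hNspec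
  have hunits (k : ℕ) : IsUnit (1 - G ^ 2 ^ k) :=
    isUnit_one_sub_pow_of_forall_norm_lt_one hG (by positivity)
  have hS : S * S = 1 := mul_units_inv_mul_self hcomm hN2.symm
  have haS : Commute (a : A) S := (Commute.refl _).mul_right (Commute.units_inv_right hcomm)
  have hspec := newtonSign_spec (𝕜 := ℂ) hS a.isUnit haS
    (one_sub_cayley_mul_eq (isUnit_add_one_of_forall_re_pos hNspec) hcomm) hunits
  have hform (k : ℕ) :
      newtonSign ℂ (a : A) k = Ring.inverse (1 - G ^ 2 ^ k) * (1 + G ^ 2 ^ k) * S := by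
    rw [mul_assoc, eq_comm, Ring.inverse_mul_eq_iff_eq_mul _ _ _ (hunits k)]
    exact (hspec k).2.2.symm
  have hGpow : Tendsto (fun k => G ^ 2 ^ k) atTop (𝓝 0) :=
    (tendsto_pow_atTop_nhds_zero_of_spectralRadius_lt_one
      (spectralRadius_lt_one_of_forall_norm_lt_one hG)).comp
      (tendsto_pow_atTop_atTop_of_one_lt one_lt_two)
  have hlim : Tendsto (newtonSign ℂ (a : A)) atTop (𝓝 S) :=
    (tendsto_inverse_one_sub_mul_one_add_mul hGpow S).congr fun k => (hform k).symm
  have hlim_inv := (NormedRing.inverse_continuousAt (⟨S, S, hS, hS⟩ : Aˣ)).tendsto.comp hlim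
  rw [Units.val_mk, Ring.inverse_eq_self_of_mul_self_eq_one hS] at hlim_inv
  exact ⟨newtonSign ℂ (a : A), rfl, fun k => (hspec k).1, fun k => rfl,
    fun k _ => ⟨hunits k, hform k⟩, hlim, hlim_inv,
    fun k => norm_newton_step_sub_le hS (hspec k).1 (hspec k).2.1⟩

/-- the Newton iteration X₀ = a, X_{k+1} = (X_k + X_k⁻¹)/2 is well defined
(each iterate invertible), has the closed form X_k = (1 − G₀^{2^k})^{-1}(1 + G₀^{2^k})·S
for k ≥ 1, converges (together with the inverses) to S = sign(a), and satisfies the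
quadratic error bound. Here N is the principal square root of a², S = a·N⁻¹,
and G₀ = (N−1)(N+1)^{-1}. -/
theorem stmt13 {A : Type*} [NormedRing A] [NormedAlgebra ℂ A] [CompleteSpace A] [NormOneClass A]
    (a : Aˣ) (ha : ∀ y : ℝ, (Complex.I * (y : ℂ)) ∉ spectrum ℂ (a : A))
    (N : Aˣ) (hN2 : (N : A) * N = (a : A) * a) (hcomm : (a : A) * N = (N : A) * a)
    (hNspec : ∀ z ∈ spectrum ℂ (N : A), 0 < z.re) (hN1 : IsUnit ((N : A) + 1)) :
    let S : A := (a : A) * (↑N⁻¹ : A)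
    let G : A := ((N : A) - 1) * Ring.inverse ((N : A) + 1)
    ∃ X : ℕ → A, X 0 = (a : A) ∧ (∀ k, IsUnit (X k)) ∧
      (∀ k, X (k + 1) = (2 : ℂ)⁻¹ • (X k + Ring.inverse (X k))) ∧
      (∀ k, 1 ≤ k → IsUnit (1 - G ^ (2 ^ k)) ∧
        X k = Ring.inverse (1 - G ^ (2 ^ k)) * (1 + G ^ (2 ^ k)) * S) ∧
      Filter.Tendsto X atTop (nhds S) ∧
      Filter.Tendsto (fun k => Ring.inverse (X k)) atTop (nhds S) ∧
      (∀ k, ‖X (k + 1) - S‖ ≤ (2 : ℝ)⁻¹ * ‖Ring.inverse (X k)‖ * ‖X k - S‖ ^ 2) :=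
  stmt13_general a N hN2 hcomm hNspec
end

section
/- If a and b are bounded operators on a Hilbert space such that Sp(ba) contains no real numbers ≤ 0, then Sp(ab) also contains no real numbers ≤ 0, and the 2×2 operator matrix [[0, a],[b, 0]] has sign equal to [[0, c],[c^{-1}, 0]] where c = a·(ba)^{-1/2}. -/
/-!
Squaring `T = [[0, a], [b, 0]]` gives `diag(ab, ba)`, so `ab` is invertible (as `T² = R²`), and
so is `ba = s²`. Hence `a` is invertible, `b = s² a⁻¹`, `Sp(ab) = Sp(ba)`, and
`Q = diag(a s a⁻¹, s)` is a square root of `T²` with spectrum in the open right half-plane.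
Such square roots are unique: if `P² = Q²` then `X = P - Q` solves `P X + X Q = 0`, i.e.
`(m + P) X = X (m - Q)` for every scalar `m`, so `X = (m + P)⁻ⁿ X (m - Q)ⁿ`; for `m` large the
spectral radii of `(m + P)⁻¹` and `m - Q` have product `< 1`, and Gelfand's formula forces
`X = 0`. Thus `R = Q`, and `T Q⁻¹ = [[0, a s⁻¹], [s a⁻¹, 0]]`.
-/

open ENNReal Matrix

theorem isUnit_of_isUnit_mul_of_isUnit_mul_swap {M : Type*} [Monoid M] {a b : M}
    (hab : IsUnit (a * b)) (hba : IsUnit (b * a)) : IsUnit a :=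
  isUnit_iff_exists_and_exists.mpr
    ⟨⟨b * ↑hab.unit⁻¹, by rw [← mul_assoc, hab.mul_val_inv]⟩,
      ⟨↑hba.unit⁻¹ * b, by rw [mul_assoc, hba.val_inv_mul]⟩⟩

theorem Complex.norm_ofReal_sub_le {m ε C : ℝ} {q : ℂ} (hm : 0 ≤ m) (hε : 0 ≤ ε)
    (hqε : ε ≤ q.re) (hqC : ‖q‖ ≤ C) (hCm : C ^ 2 ≤ m * ε) : ‖(m : ℂ) - q‖ ≤ m + ε / 2 := by
  have hsq : ‖(m : ℂ) - q‖ ^ 2 = m ^ 2 - 2 * m * q.re + ‖q‖ ^ 2 := by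
    simp only [Complex.sq_norm, Complex.normSq_apply, Complex.sub_re, Complex.sub_im,
      Complex.ofReal_re, Complex.ofReal_im]
    ring
  refine (pow_le_pow_iff_left₀ (norm_nonneg _) (by positivity) two_ne_zero).mp ?_
  nlinarith [norm_nonneg q, mul_le_mul_of_nonneg_left hqε hm]

section Algebra

variable {𝕜 A : Type*} [NormedField 𝕜] [Ring A] [Algebra 𝕜 A]

theorem spectrum_mul_comm_of_isUnit {a b : A} (hab : IsUnit (a * b)) (hba : IsUnit (b * a)) :
    spectrum 𝕜 (a * b) = spectrum 𝕜 (b * a) := by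
  rw [← Set.sdiff_singleton_eq_self ((spectrum.zero_notMem_iff 𝕜).mpr hab),
    spectrum.nonzero_mul_comm, Set.sdiff_singleton_eq_self ((spectrum.zero_notMem_iff 𝕜).mpr hba)]

theorem spectralRadius_le_ofReal {a : A} {r : ℝ} (h : ∀ z ∈ spectrum 𝕜 a, ‖z‖ ≤ r) :
    spectralRadius 𝕜 a ≤ ENNReal.ofReal r :=
  iSup₂_le fun z hz => by
    rw [← norm_toNNReal]
    exact ENNReal.ofReal_le_ofReal (h z hz)

theorem spectralRadius_inv_le {u : Aˣ} {r : ℝ} (hr : 0 < r)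
    (h : ∀ z ∈ spectrum 𝕜 (u : A), r ≤ ‖z‖) :
    spectralRadius 𝕜 (↑u⁻¹ : A) ≤ ENNReal.ofReal r⁻¹ := by
  refine spectralRadius_le_ofReal fun z hz => ?_
  rw [← spectrum.map_inv, Set.mem_inv] at hz
  simpa using inv_anti₀ hr (h _ hz)

end Algebra

section ComplexAlgebra

variable {A : Type*} [Ring A] [Algebra ℂ A]

theorem add_le_norm_of_mem_spectrum_algebraMap_add {P : A} {ε : ℝ}
    (hP : ∀ z ∈ spectrum ℂ P, ε ≤ z.re) (m : ℝ) :
    ∀ z ∈ spectrum ℂ (algebraMap ℂ A m + P), m + ε ≤ ‖z‖ := by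
  intro z hz
  rw [← spectrum.vadd_eq] at hz
  obtain ⟨p, hp, rfl⟩ := hz
  calc m + ε ≤ ((m : ℂ) + p).re := by simpa using hP p hp
    _ ≤ ‖(m : ℂ) +ᵥ p‖ := Complex.re_le_norm _

theorem norm_le_of_mem_spectrum_algebraMap_sub {Q : A} {m ε C : ℝ} (hm : 0 ≤ m) (hε : 0 ≤ ε)
    (hQε : ∀ z ∈ spectrum ℂ Q, ε ≤ z.re) (hQC : ∀ z ∈ spectrum ℂ Q, ‖z‖ ≤ C)
    (hCm : C ^ 2 ≤ m * ε) : ∀ z ∈ spectrum ℂ (algebraMap ℂ A m - Q), ‖z‖ ≤ m + ε / 2 := by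
  intro z hz
  rw [← spectrum.singleton_sub_eq, Set.singleton_sub] at hz
  obtain ⟨q, hq, rfl⟩ := hz
  exact Complex.norm_ofReal_sub_le hm hε (hQε q hq) (hQC q hq) hCm

end ComplexAlgebra

section BanachAlgebra

variable {A : Type*} [NormedRing A] [NormedAlgebra ℂ A] [CompleteSpace A]

theorem spectralRadius_ne_top (a : A) : spectralRadius ℂ a ≠ ∞ := by
  refine ((spectrum.spectralRadius_le_pow_nnnorm_pow_one_div ℂ a 0).trans_lt ?_).ne
  simpa using ENNReal.mul_lt_top coe_lt_top coe_lt_top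

theorem eq_zero_of_forall_eq_pow_mul_mul_pow {x y d : A} (hd : ∀ n : ℕ, d = x ^ n * d * y ^ n)
    (hρ : spectralRadius ℂ x * spectralRadius ℂ y < 1) : d = 0 := by
  by_contra hd0
  have hgrowth : ∀ n : ℕ, (1 : ℝ≥0∞) ≤ ‖x ^ n‖₊ * ‖y ^ n‖₊ := fun n => by
    have : ‖d‖ ≤ ‖x ^ n‖ * ‖y ^ n‖ * ‖d‖ := calc
      ‖d‖ = ‖x ^ n * d * y ^ n‖ := by rw [← hd n]
      _ ≤ ‖x ^ n‖ * ‖d‖ * ‖y ^ n‖ := norm_mul₃_le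
      _ = ‖x ^ n‖ * ‖y ^ n‖ * ‖d‖ := by ring
    have : (1 : ℝ) ≤ ‖x ^ n‖ * ‖y ^ n‖ :=
      le_of_mul_le_mul_right (by rwa [one_mul]) (norm_pos_iff.mpr hd0)
    exact_mod_cast this
  have hroot : ∀ n : ℕ, (1 : ℝ≥0∞) ≤
      (‖x ^ n‖₊ : ℝ≥0∞) ^ (1 / n : ℝ) * (‖y ^ n‖₊ : ℝ≥0∞) ^ (1 / n : ℝ) := fun n => by
    rw [← ENNReal.mul_rpow_of_nonneg _ _ (by positivity)]
    simpa using ENNReal.rpow_le_rpow (hgrowth n) (z := 1 / n) (by positivity)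
  have hlim := ENNReal.Tendsto.mul
    (spectrum.pow_nnnorm_pow_one_div_tendsto_nhds_spectralRadius x) (.inr (spectralRadius_ne_top y))
    (spectrum.pow_nnnorm_pow_one_div_tendsto_nhds_spectralRadius y) (.inr (spectralRadius_ne_top x))
  exact (ge_of_tendsto' hlim hroot).not_gt hρ

theorem eq_zero_of_mul_add_mul_eq_zero {P Q X : A} (hP : ∀ z ∈ spectrum ℂ P, 0 < z.re)
    (hQ : ∀ z ∈ spectrum ℂ Q, 0 < z.re) (h : P * X + X * Q = 0) : X = 0 := by
  obtain ⟨ε, hε, hPε, hQε⟩ :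
      ∃ ε > 0, (∀ z ∈ spectrum ℂ P, ε ≤ z.re) ∧ ∀ z ∈ spectrum ℂ Q, ε ≤ z.re := by
    obtain ⟨ε, hε, hle⟩ := ((spectrum.isCompact P).union (spectrum.isCompact Q)).exists_forall_le'
      Complex.continuous_re.continuousOn (a := 0) (by rintro z (hz | hz); exacts [hP z hz, hQ z hz])
    exact ⟨ε, hε, fun z hz => hle z (.inl hz), fun z hz => hle z (.inr hz)⟩
  obtain ⟨C, hC⟩ := isBounded_iff_forall_norm_le.mp (spectrum.isBounded (𝕜 := ℂ) Q)
  -- With this `m`, `‖m - q‖ ≤ m + ε/2 < m + ε ≤ ‖m + p‖` for `q ∈ Sp(Q)`, `p ∈ Sp(P)`.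
  set m : ℝ := C ^ 2 / ε with hm_def
  have hm : 0 ≤ m := by positivity
  have hCm : C ^ 2 ≤ m * ε := by rw [hm_def, div_mul_cancel₀ _ hε.ne']
  have hspec_add := add_le_norm_of_mem_spectrum_algebraMap_add hPε m
  obtain ⟨u, hu⟩ : IsUnit (algebraMap ℂ A m + P) :=
    (spectrum.zero_notMem_iff ℂ).mp fun h0 => by
      linarith [hspec_add 0 h0, norm_zero (E := ℂ)]
  have hsemi : SemiconjBy X (algebraMap ℂ A m - Q) u := by
    rw [SemiconjBy, hu, mul_sub, add_mul, ← Algebra.commutes, sub_eq_add_neg,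
      neg_eq_of_add_eq_zero_left h]
  refine eq_zero_of_forall_eq_pow_mul_mul_pow (x := ↑u⁻¹) (y := algebraMap ℂ A m - Q)
    (fun n => ?_) ?_
  · rw [mul_assoc, (hsemi.pow_right n).eq, ← mul_assoc, ← Units.val_pow_eq_pow_val,
      ← Units.val_pow_eq_pow_val, ← Units.val_mul, inv_pow, inv_mul_cancel, Units.val_one, one_mul]
  calc spectralRadius ℂ (↑u⁻¹ : A) * spectralRadius ℂ (algebraMap ℂ A m - Q)
      ≤ ENNReal.ofReal (m + ε)⁻¹ * ENNReal.ofReal (m + ε / 2) :=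
        mul_le_mul' (spectralRadius_inv_le (by positivity) (hu ▸ hspec_add))
          (spectralRadius_le_ofReal
            (norm_le_of_mem_spectrum_algebraMap_sub hm hε.le hQε hC hCm))
    _ = ENNReal.ofReal ((m + ε / 2) / (m + ε)) := by
        rw [← ENNReal.ofReal_mul (by positivity), inv_mul_eq_div]
    _ < 1 := ENNReal.ofReal_lt_one.mpr ((div_lt_one (by positivity)).mpr (by linarith))

theorem eq_of_mul_self_eq_mul_self {P Q : A} (hP : ∀ z ∈ spectrum ℂ P, 0 < z.re)
    (hQ : ∀ z ∈ spectrum ℂ Q, 0 < z.re) (h : P * P = Q * Q) : P = Q :=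
  sub_eq_zero.mp <| eq_zero_of_mul_add_mul_eq_zero hP hQ <| by
    rw [mul_sub, sub_mul, h]
    abel

end BanachAlgebra

namespace Matrix

variable {n A : Type*} [Fintype n] [DecidableEq n]

theorem isUnit_diagonal_iff_forall [Ring A] {d : n → A} :
    IsUnit (diagonal d) ↔ ∀ i, IsUnit (d i) := by
  refine ⟨fun h i => ?_, fun h => (Pi.isUnit_iff.mpr h).map (diagonalRingHom n A)⟩
  obtain ⟨M, hdM, hMd⟩ := isUnit_iff_exists.mp h
  refine isUnit_iff_exists.mpr ⟨M i i, ?_, ?_⟩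
  · simpa using congrFun₂ hdM i i
  · simpa using congrFun₂ hMd i i

theorem spectrum_diagonal_subset {R : Type*} [CommSemiring R] [Ring A] [Algebra R A]
    (d : n → A) : spectrum R (diagonal d) ⊆ ⋃ i, spectrum R (d i) := by
  intro z hz
  by_contra hz'
  simp only [Set.mem_iUnion, not_exists, spectrum.notMem_iff] at hz'
  refine spectrum.mem_iff.mp hz ?_
  rw [algebraMap_eq_diagonal, Pi.algebraMap_def, diagonal_sub]
  exact isUnit_diagonal_iff_forall.mpr hz'

theorem fin_two_antidiagonal_mul_self [Semiring A] (x y : A) :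
    !![0, x; y, 0] * !![0, x; y, 0] = diagonal ![x * y, y * x] := by
  ext i j
  fin_cases i <;> fin_cases j <;> simp

theorem fin_two_antidiagonal_mul_diagonal [Semiring A] (x y p q : A) :
    !![0, x; y, 0] * diagonal ![p, q] = !![0, x * q; y * p, 0] := by
  ext i j
  fin_cases i <;> fin_cases j <;> simp

end Matrix

attribute [local instance] Matrix.linftyOpNormedRing Matrix.linftyOpNormedAlgebra

-- The uniformity of the `linftyOp` norm is only definitionally the product uniformity.
instance Matrix.linftyOp_completeSpace {n α : Type*} [Fintype n] [DecidableEq n] [NormedRing α]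
    [CompleteSpace α] :
    @CompleteSpace (Matrix n n α) (PseudoMetricSpace.toUniformSpace (α := Matrix n n α)) :=
  inferInstanceAs (CompleteSpace (n → n → α))

theorem stmt14_general {H : Type*} [NormedAddCommGroup H] [InnerProductSpace ℂ H] [CompleteSpace H]
    (a b : H →L[ℂ] H)
    (hba : ∀ x : ℝ, x ≤ 0 → (x : ℂ) ∉ spectrum ℂ (b * a))
    (s : H →L[ℂ] H) (hs2 : s * s = b * a)
    (hsspec : ∀ z ∈ spectrum ℂ s, 0 < z.re) (hsu : IsUnit s)
    (R : Matrix (Fin 2) (Fin 2) (H →L[ℂ] H))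
    (hR2 : R * R = !![0, a; b, 0] * !![0, a; b, 0])
    (hRspec : ∀ z ∈ spectrum ℂ R, 0 < z.re) (hRu : IsUnit R) :
    (∀ x : ℝ, x ≤ 0 → (x : ℂ) ∉ spectrum ℂ (a * b)) ∧
    IsUnit (a * Ring.inverse s) ∧
    !![0, a; b, 0] * Ring.inverse R
      = !![0, a * Ring.inverse s; Ring.inverse (a * Ring.inverse s), 0] := by
  rw [fin_two_antidiagonal_mul_self] at hR2
  have hab : IsUnit (a * b) := isUnit_diagonal_iff_forall.mp (hR2 ▸ hRu.mul hRu) 0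
  obtain ⟨s, rfl⟩ := hsu
  have hba_unit : IsUnit (b * a) := hs2 ▸ (s * s).isUnit
  obtain ⟨a, rfl⟩ := isUnit_of_isUnit_mul_of_isUnit_mul_swap hab hba_unit
  obtain rfl : b = ↑(s * s * a⁻¹) := by
    rw [Units.val_mul, Units.val_mul, hs2, Units.mul_inv_cancel_right]
  refine ⟨fun x hx => spectrum_mul_comm_of_isUnit (𝕜 := ℂ) hab hba_unit ▸ hba x hx, ?_, ?_⟩
  · rw [Ring.inverse_unit, ← Units.val_mul]
    exact Units.isUnit _
  set Q : Matrix (Fin 2) (Fin 2) (H →L[ℂ] H) := diagonal ![↑(a * s * a⁻¹), ↑s]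
  have hQ2 : R * R = Q * Q := by
    rw [hR2, diagonal_mul_diagonal]
    congr 1
    ext i : 1
    fin_cases i <;> simp [← Units.val_mul, mul_assoc]
  have hQspec : ∀ z ∈ spectrum ℂ Q, 0 < z.re := by
    intro z hz
    obtain ⟨i, hi⟩ := Set.mem_iUnion.mp (spectrum_diagonal_subset _ hz)
    fin_cases i
    · rw [Fin.zero_eta, cons_val_zero, Units.val_mul, Units.val_mul,
        spectrum.units_conjugate] at hi
      exact hsspec z hi
    · exact hsspec z hi
  have hRQ : R = Q := eq_of_mul_self_eq_mul_self hRspec hQspec hQ2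
  rw [Ring.inverse_unit, ← Units.val_mul, Ring.inverse_unit]
  refine ((Ring.eq_mul_inverse_iff_mul_eq _ _ _ hRu).mpr ?_).symm
  rw [hRQ, fin_two_antidiagonal_mul_diagonal]
  simp [← Units.val_mul, mul_assoc]

/-- if Sp(ba) contains no reals ≤ 0 then neither does Sp(ab), and
sign([[0,a],[b,0]]) = [[0,c],[c⁻¹,0]] where c = a·(ba)^{-1/2}.  Here s is the principal
square root of ba, and R the principal square root of T² for T = [[0,a],[b,0]]. -/
theorem stmt14 {H : Type*} [NormedAddCommGroup H] [InnerProductSpace ℂ H] [CompleteSpace H]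
    (a b : H →L[ℂ] H)
    (hba : ∀ x : ℝ, x ≤ 0 → (x : ℂ) ∉ spectrum ℂ (b * a))
    (s : H →L[ℂ] H) (hs2 : s * s = b * a) (hscomm : (b * a) * s = s * (b * a))
    (hsspec : ∀ z ∈ spectrum ℂ s, 0 < z.re) (hsu : IsUnit s)
    (R : Matrix (Fin 2) (Fin 2) (H →L[ℂ] H))
    (hR2 : R * R = !![0, a; b, 0] * !![0, a; b, 0])
    (hRcomm : !![0, a; b, 0] * R = R * !![0, a; b, 0])
    (hRspec : ∀ z ∈ spectrum ℂ R, 0 < z.re) (hRu : IsUnit R) :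
    (∀ x : ℝ, x ≤ 0 → (x : ℂ) ∉ spectrum ℂ (a * b)) ∧
    IsUnit (a * Ring.inverse s) ∧
    !![0, a; b, 0] * Ring.inverse R
      = !![0, a * Ring.inverse s; Ring.inverse (a * Ring.inverse s), 0] :=
  stmt14_general a b hba s hs2 hsspec hsu R hR2 hRspec hRu
end

section
/- Let a and b be bounded operators on a Hilbert space H with b accretive and a strictly accretive (a + a* ≥ ε·1 for some ε > 0, so a is invertible). Then ‖(b + ta)^{-1}‖ ≤ 1/(tε) for all t > 0, and consequently a^{-1/2} b a^{-1/2} is of type M: ‖(a^{-1/2} b a^{-1/2} + t1)^{-1}‖ ≤ ‖a^{1/2}‖²/(tε) for all t > 0. -/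
/-!
Strict accretivity of `b + t a` with constant `t ε` gives the lower bound `t ε ‖ζ‖ ≤ ‖(b + t a) ζ‖`,
so `b + t a` is invertible with `‖(b + t a)⁻¹‖ ≤ 1 / (t ε)`. Writing `a = r²`, the operator
`r⁻¹ b r⁻¹ + t` is the conjugate `r⁻¹ (b + t a) r⁻¹`, whose inverse `r (b + t a)⁻¹ r` has norm
at most `‖r‖² / (t ε)`.
-/

open RCLike
open scoped InnerProductSpace Ring

namespace ContinuousLinearMap

variable {𝕜 H : Type*} [RCLike 𝕜] [NormedAddCommGroup H] [InnerProductSpace 𝕜 H]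

lemma mul_norm_le_norm_apply_of_le_re_inner (T : H →L[𝕜] H) {c : ℝ}
    (hT : ∀ x, c * ‖x‖ ^ 2 ≤ re ⟪T x, x⟫_𝕜) (x : H) : c * ‖x‖ ≤ ‖T x‖ := by
  rcases (norm_nonneg x).eq_or_lt with hx | hx
  · simp [← hx]
  refine le_of_mul_le_mul_right ?_ hx
  calc c * ‖x‖ * ‖x‖ = c * ‖x‖ ^ 2 := by ring
    _ ≤ re ⟪T x, x⟫_𝕜 := hT x
    _ ≤ ‖⟪T x, x⟫_𝕜‖ := re_le_norm _
    _ ≤ ‖T x‖ * ‖x‖ := norm_inner_le_norm _ _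

lemma isUnit_of_le_re_inner [CompleteSpace H] (T : H →L[𝕜] H) {c : ℝ} (hc : 0 < c)
    (hT : ∀ x, c * ‖x‖ ^ 2 ≤ re ⟪T x, x⟫_𝕜) : IsUnit T :=
  T.isUnit_of_forall_le_norm_inner_map (c := ⟨c, hc.le⟩) hc fun x =>
    calc ‖x‖ ^ 2 * c = c * ‖x‖ ^ 2 := mul_comm _ _
      _ ≤ re ⟪T x, x⟫_𝕜 := hT x
      _ ≤ ‖⟪T x, x⟫_𝕜‖ := re_le_norm _

lemma norm_inverse_le_of_mul_norm_le {E : Type*} [NormedAddCommGroup E] [NormedSpace 𝕜 E]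
    {T : E →L[𝕜] E} (hT : IsUnit T) {c : ℝ} (hc : 0 < c) (hbound : ∀ x, c * ‖x‖ ≤ ‖T x‖) :
    ‖T⁻¹ʳ‖ ≤ 1 / c := by
  refine opNorm_le_bound _ (by positivity) fun x => ?_
  have hx : T (T⁻¹ʳ x) = x := by
    simpa using DFunLike.congr_fun (Ring.mul_inverse_cancel T hT) x
  rw [div_mul_eq_mul_div, le_div_iff₀ hc, mul_comm]
  simpa [hx] using hbound (T⁻¹ʳ x)

lemma le_re_inner_add_smul {a b : H →L[𝕜] H} {ε t : ℝ} (ht : 0 ≤ t)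
    (hb : ∀ x, 0 ≤ re ⟪b x, x⟫_𝕜) (ha : ∀ x, ε * ‖x‖ ^ 2 ≤ re ⟪a x, x⟫_𝕜) (x : H) :
    t * ε * ‖x‖ ^ 2 ≤ re ⟪(b + (t : 𝕜) • a) x, x⟫_𝕜 := by
  have hre : re ⟪(b + (t : 𝕜) • a) x, x⟫_𝕜 = re ⟪b x, x⟫_𝕜 + t * re ⟪a x, x⟫_𝕜 := by
    simp [inner_add_left, inner_smul_left]
  rw [hre, mul_assoc]
  nlinarith [hb x, mul_le_mul_of_nonneg_left (ha x) ht]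

end ContinuousLinearMap

lemma Ring.inverse_mul_add_smul_mul_inverse {R A : Type*} [CommSemiring R] [Ring A] [Algebra R A]
    {r : A} (hr : IsUnit r) (b : A) (c : R) :
    r⁻¹ʳ * (b + c • (r * r)) * r⁻¹ʳ = r⁻¹ʳ * b * r⁻¹ʳ + c • 1 := by
  have hrr : r⁻¹ʳ * (r * r) * r⁻¹ʳ = 1 := by
    rw [← mul_assoc, Ring.inverse_mul_cancel r hr, one_mul, Ring.mul_inverse_cancel r hr]
  rw [mul_add, add_mul, mul_smul_comm, smul_mul_assoc, hrr]

theorem stmt16_general {H : Type*} [NormedAddCommGroup H] [InnerProductSpace ℂ H] [CompleteSpace H]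
    (a b : H →L[ℂ] H) (ε : ℝ) (hε : 0 < ε)
    (hb : ∀ ζ : H, 0 ≤ (@inner ℂ H _ (b ζ) ζ).re)
    (ha : ∀ ζ : H, ε * ‖ζ‖ ^ 2 ≤ (@inner ℂ H _ (a ζ) ζ).re)
    (r : H →L[ℂ] H) (hr2 : r * r = a)
    (hru : IsUnit r) :
    ∀ t : ℝ, 0 < t →
      (IsUnit (b + (t : ℂ) • a) ∧ ‖Ring.inverse (b + (t : ℂ) • a)‖ ≤ 1 / (t * ε)) ∧
      (IsUnit (Ring.inverse r * b * Ring.inverse r + (t : ℂ) • 1) ∧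
        ‖Ring.inverse (Ring.inverse r * b * Ring.inverse r + (t : ℂ) • 1)‖
          ≤ ‖r‖ ^ 2 / (t * ε)) := by
  intro t ht
  have htε : 0 < t * ε := by positivity
  have hcoer : ∀ x, t * ε * ‖x‖ ^ 2 ≤ re ⟪(b + (t : ℂ) • a) x, x⟫_ℂ :=
    ContinuousLinearMap.le_re_inner_add_smul ht.le hb ha
  have hunit := ContinuousLinearMap.isUnit_of_le_re_inner _ htε hcoer
  have hnorm := ContinuousLinearMap.norm_inverse_le_of_mul_norm_le hunit htε
    (ContinuousLinearMap.mul_norm_le_norm_apply_of_le_re_inner _ hcoer)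
  refine ⟨⟨hunit, hnorm⟩, ?_⟩
  rw [← Ring.inverse_mul_add_smul_mul_inverse hru, hr2, Ring.inverse_mul (.inr hru.ringInverse),
    Ring.inverse_mul (.inl hru.ringInverse), Ring.inverse_inverse hru]
  refine ⟨(hru.ringInverse.mul hunit).mul hru.ringInverse, ?_⟩
  calc ‖r * ((b + (t : ℂ) • a)⁻¹ʳ * r)‖ ≤ ‖r‖ * (‖(b + (t : ℂ) • a)⁻¹ʳ‖ * ‖r‖) :=
        (norm_mul_le _ _).trans (by gcongr; exact norm_mul_le _ _)
    _ ≤ ‖r‖ * (1 / (t * ε) * ‖r‖) := by gcongr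
    _ = ‖r‖ ^ 2 / (t * ε) := by ring

/-- for b accretive and a strictly accretive (with constant ε) on a Hilbert
space, ‖(b + ta)⁻¹‖ ≤ 1/(tε) for all t > 0, and a^{-1/2}·b·a^{-1/2} is of type M with
‖(a^{-1/2}ba^{-1/2} + t)⁻¹‖ ≤ ‖a^{1/2}‖²/(tε).  Here r is the principal square root of a. -/
theorem stmt16 {H : Type*} [NormedAddCommGroup H] [InnerProductSpace ℂ H] [CompleteSpace H]
    (a b : H →L[ℂ] H) (ε : ℝ) (hε : 0 < ε)
    (hb : ∀ ζ : H, 0 ≤ (@inner ℂ H _ (b ζ) ζ).re)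
    (ha : ∀ ζ : H, ε * ‖ζ‖ ^ 2 ≤ (@inner ℂ H _ (a ζ) ζ).re)
    (r : H →L[ℂ] H) (hr2 : r * r = a)
    (hrspec : ∀ z ∈ spectrum ℂ r, 0 < z.re) (hru : IsUnit r) :
    ∀ t : ℝ, 0 < t →
      (IsUnit (b + (t : ℂ) • a) ∧ ‖Ring.inverse (b + (t : ℂ) • a)‖ ≤ 1 / (t * ε)) ∧
      (IsUnit (Ring.inverse r * b * Ring.inverse r + (t : ℂ) • 1) ∧
        ‖Ring.inverse (Ring.inverse r * b * Ring.inverse r + (t : ℂ) • 1)‖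
          ≤ ‖r‖ ^ 2 / (t * ε)) :=
  stmt16_general a b ε hε hb ha r hr2 hru
end

section
/- Let a and b be strictly accretive invertible elements of a unital Banach algebra such that for all t ≥ 0, ta + b is invertible. Then the spectrum of a^{-1/2} b a^{-1/2} contains no real numbers ≤ 0, and hence (a^{-1/2} b a^{-1/2})^{1/2} has spectrum in the open right half-plane; moreover G = a^{1/2}(a^{-1/2} b a^{-1/2})^{1/2} a^{1/2} satisfies G a^{-1} G = b. -/
/-!
Conjugating by `r⁻¹ = a^{-1/2}` turns `t a + b` into `t + c` with `c = r⁻¹ b r⁻¹`, so the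
invertibility of `t a + b` for `t ≥ 0` says exactly that the spectrum of `c` avoids `(-∞, 0]`.
The square root is `exp (½ log c)`, with `log c = (c - 1) ∫₀¹ (1 + t (c - 1))⁻¹ dt`, computed in
the closed commutative subalgebra generated by `c`. Passing to that subalgebra only fills in bounded
components of the complement of the spectrum, which cannot meet the unbounded ray `(-∞, 0]`.
There `exp (log c) = c` because `exp (-(c - 1) ∫₀ᵘ (1 + t (c - 1))⁻¹ dt) (1 + u (c - 1))` has zero
derivative, and every character sends `log c` to the principal logarithm of its value at `c`, so
by Gelfand theory the spectrum of `exp (½ log c)` consists of principal square roots.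
-/

open Set Complex

theorem Complex.re_exp_log_div_two_pos {z : ℂ} (hz : z ∈ slitPlane) :
    0 < (exp (log z / 2)).re := by
  rw [exp_re]
  refine mul_pos (Real.exp_pos _) (Real.cos_pos_of_mem_Ioo ?_)
  have him : (log z / 2).im = z.arg / 2 := by simp [log_im]
  have hlt : z.arg < Real.pi := (arg_le_pi z).lt_of_ne (slitPlane_arg_ne_pi hz)
  rw [him]
  constructor <;> linarith [neg_pi_lt_arg z]

theorem Complex.subset_slitPlane_iff {s : Set ℂ} :
    s ⊆ slitPlane ↔ ∀ x : ℝ, x ≤ 0 → (x : ℂ) ∉ s := by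
  refine ⟨fun h x hx hxs => (ofReal_mem_slitPlane.mp (h hxs)).not_ge hx, fun h z hz => ?_⟩
  rw [mem_slitPlane_iff_not_le_zero]
  intro hz0
  obtain ⟨hre, him⟩ := le_def.mp hz0
  have : z = (z.re : ℂ) := Complex.ext rfl (by simpa using him)
  exact h z.re hre (this ▸ hz)

theorem isUnit_one_add_smul_sub_one {A : Type*} [Ring A] [Algebra ℂ A] {c : A}
    (hc : spectrum ℂ c ⊆ slitPlane) {t : ℝ} (ht : t ∈ Icc 0 1) :
    IsUnit (1 + (t : ℂ) • (c - 1)) := by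
  rcases ht.1.eq_or_lt with rfl | htpos
  · simp
  have ht0 : (t : ℂ) ≠ 0 := mod_cast htpos.ne'
  set w : ℂ := ((t : ℂ) - 1) / t
  have hw : w ∉ spectrum ℂ c := fun hw => by
    have := starConvex_one_slitPlane.add_smul_mem (y := w - 1) (by simpa using hc hw) ht.1 ht.2
    refine slitPlane_ne_zero this ?_
    simp only [w, real_smul]
    field_simp
    ring
  have hunit := (spectrum.notMem_iff.mp hw).smul (Units.mk0 (-(t : ℂ)) (neg_ne_zero.mpr ht0))
  convert hunit using 1
  have hw' : -(t : ℂ) * w = 1 - t := by simp only [w]; field_simp; ring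
  rw [Units.smul_def, Units.val_mk0, Algebra.algebraMap_eq_smul_one, smul_sub (-(t : ℂ)),
    smul_smul, hw']
  module

theorem Subalgebra.spectrum_subset_slitPlane {A : Type*} [NormedRing A] [NormedAlgebra ℂ A]
    [CompleteSpace A] (S : Subalgebra ℂ A) [IsClosed (S : Set A)] {x : S}
    (hx : spectrum ℂ (x : A) ⊆ slitPlane) : spectrum ℂ x ⊆ slitPlane := by
  refine subset_slitPlane_iff.mpr fun y hy hyx => ?_
  have hray : ofReal '' Iic 0 ⊆ connectedComponentIn (spectrum ℂ (x : A))ᶜ y :=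
    (isPreconnected_Iic.image _ continuous_ofReal.continuousOn).subset_connectedComponentIn
      ⟨y, hy, rfl⟩ (by
        rintro _ ⟨u, hu, rfl⟩
        exact fun hu' => subset_slitPlane_iff.mp hx u hu hu')
  have hbdd := isometry_ofReal.antilipschitz.isBounded_preimage
    ((Subalgebra.spectrum_isBounded_connectedComponentIn S x hyx).subset hray)
  exact not_bddBelow_Iic (0 : ℝ) ((hbdd.subset (subset_preimage_image _ _)).bddBelow)

section SlitLog

variable {A : Type*} [NormedRing A] [NormedAlgebra ℂ A] [CompleteSpace A]

/-- Modelled on `log z = (z - 1) ∫₀¹ (1 + t (z - 1))⁻¹ dt` (`Complex.log_eq_integral`). Unless the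
spectrum of `c` lies in the slit plane, `Ring.inverse` takes junk values in the integrand. -/
noncomputable def slitLog (c : A) : A :=
  (c - 1) * ∫ t in (0 : ℝ)..1, Ring.inverse (1 + (t : ℂ) • (c - 1))

theorem continuousOn_ring_inverse_one_add_smul_sub_one {c : A} (hc : spectrum ℂ c ⊆ slitPlane) :
    ContinuousOn (fun t : ℝ => Ring.inverse (1 + (t : ℂ) • (c - 1))) (Icc 0 1) := by
  intro t ht
  have hinv := NormedRing.inverse_continuousAt (isUnit_one_add_smul_sub_one hc ht).unit
  rw [IsUnit.unit_spec] at hinv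
  exact (hinv.comp (f := fun t : ℝ => 1 + (t : ℂ) • (c - 1)) (by fun_prop)).continuousWithinAt

variable {B : Type*} [NormedCommRing B] [NormedAlgebra ℂ B] [CompleteSpace B]

theorem exp_slitLog {c : B} (hc : spectrum ℂ c ⊆ slitPlane) : NormedSpace.exp (slitLog c) = c := by
  let : NormedAlgebra ℚ B := .restrictScalars ℚ ℂ B
  set g : ℝ → B := fun t => 1 + (t : ℂ) • (c - 1)
  set v : ℝ → B := fun u => ∫ t in (0 : ℝ)..u, Ring.inverse (g t)
  have hcont := continuousOn_ring_inverse_one_add_smul_sub_one hc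
  have hv : ∀ u ∈ Icc (0 : ℝ) 1, HasDerivWithinAt v (Ring.inverse (g u)) (Icc 0 1) u := by
    intro u hu
    have : Fact (u ∈ Icc (0 : ℝ) 1) := ⟨hu⟩
    exact intervalIntegral.integral_hasDerivWithinAt_right
      ((hcont.mono (uIcc_subset_Icc ⟨le_rfl, zero_le_one⟩ hu)).intervalIntegrable)
      (hcont.stronglyMeasurableAtFilter_nhdsWithin measurableSet_Icc u) (hcont u hu)
  have hderiv : ∀ u ∈ Icc (0 : ℝ) 1,
      HasDerivWithinAt (fun u => NormedSpace.exp (-((c - 1) * v u)) * g u) 0 (Icc 0 1) u := by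
    intro u hu
    have hexp := ((hasFDerivAt_exp (𝕂 := ℂ) (x := -((c - 1) * v u))).restrictScalars ℝ
      ).comp_hasDerivWithinAt u ((hv u hu).const_mul (c - 1)).neg
    have hg : HasDerivWithinAt g (c - 1) (Icc 0 1) u := by
      simpa [g] using ((hasDerivAt_id u).ofReal_comp.smul_const (c - 1)).const_add (1 : B)
        |>.hasDerivWithinAt
    have hcancel : Ring.inverse (g u) * g u = 1 := Ring.inverse_mul_cancel _
      (isUnit_one_add_smul_sub_one hc hu)
    convert hexp.mul hg using 1
    · rfl
    · simp only [ContinuousLinearMap.restrictScalars_smul, smul_apply,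
        ContinuousLinearMap.coe_restrictScalars', one_apply_eq_self, smul_eq_mul, mul_neg, neg_mul,
        Function.comp_apply, Pi.neg_apply]
      linear_combination (NormedSpace.exp (-((c - 1) * v u)) * (c - 1)) * hcancel
  have hconst := norm_image_sub_le_of_norm_deriv_le_segment' (C := 0) hderiv (fun _ _ => by simp)
    1 ⟨zero_le_one, le_rfl⟩
  have hv0 : v 0 = 0 := intervalIntegral.integral_same
  have hexp_neg : NormedSpace.exp (-slitLog c) * c = 1 := by
    simpa [hv0, g, sub_eq_zero, slitLog, v] using hconst
  calc NormedSpace.exp (slitLog c)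
      = NormedSpace.exp (slitLog c) * NormedSpace.exp (-slitLog c) * c := by
        rw [mul_assoc, hexp_neg, mul_one]
    _ = c := by rw [← NormedSpace.exp_add, add_neg_cancel, NormedSpace.exp_zero, one_mul]

theorem WeakDual.CharacterSpace.apply_slitLog (φ : WeakDual.characterSpace ℂ B) {c : B}
    (hc : spectrum ℂ c ⊆ slitPlane) : φ (slitLog c) = log (φ c) := by
  have hφc : 1 + (φ c - 1) ∈ slitPlane := by
    simpa using hc (WeakDual.CharacterSpace.apply_mem_spectrum φ c)
  have hinv : ∀ t ∈ Icc (0 : ℝ) 1,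
      φ (Ring.inverse (1 + (t : ℂ) • (c - 1))) = (1 + t • (φ c - 1))⁻¹ := fun t ht => by
    obtain ⟨u, hu⟩ := isUnit_one_add_smul_sub_one hc ht
    rw [← hu, Ring.inverse_unit, map_units_inv, hu, map_add, map_one, map_smul, map_sub, map_one,
      smul_eq_mul, real_smul]
  rw [← add_sub_cancel (1 : ℂ) (φ c), log_eq_integral hφc, slitLog, map_mul, map_sub, map_one]
  congr 1
  calc φ (∫ t in (0 : ℝ)..1, Ring.inverse (1 + (t : ℂ) • (c - 1)))
      = ∫ t in (0 : ℝ)..1, φ (Ring.inverse (1 + (t : ℂ) • (c - 1))) :=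
        (ContinuousLinearMap.intervalIntegral_comp_comm (φ : WeakDual ℂ B)
          ((continuousOn_ring_inverse_one_add_smul_sub_one hc).intervalIntegrable_of_Icc
            zero_le_one)).symm
    _ = _ := intervalIntegral.integral_congr fun t ht =>
        hinv t (by rwa [uIcc_of_le zero_le_one] at ht)

end SlitLog

theorem NormedCommRing.exists_mul_self_eq_of_spectrum_subset_slitPlane {B : Type*}
    [NormedCommRing B] [NormedAlgebra ℂ B] [CompleteSpace B] {c : B}
    (hc : spectrum ℂ c ⊆ slitPlane) :
    ∃ s : B, s * s = c ∧ ∀ z ∈ spectrum ℂ s, 0 < z.re := by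
  let : NormedAlgebra ℚ B := .restrictScalars ℚ ℂ B
  refine ⟨NormedSpace.exp ((2⁻¹ : ℂ) • slitLog c), ?_, fun z hz => ?_⟩
  · rw [← NormedSpace.exp_add, ← add_smul, ← two_mul, mul_inv_cancel₀ two_ne_zero, one_smul,
      exp_slitLog hc]
  · obtain ⟨φ, rfl⟩ := WeakDual.CharacterSpace.mem_spectrum_iff_exists.mp hz
    rw [NormedSpace.map_exp φ (map_continuous φ), map_smul,
      WeakDual.CharacterSpace.apply_slitLog φ hc, smul_eq_mul, ← exp_eq_exp_ℂ, inv_mul_eq_div]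
    exact re_exp_log_div_two_pos (hc (WeakDual.CharacterSpace.apply_mem_spectrum φ c))

theorem exists_mul_self_eq_of_spectrum_subset_slitPlane {A : Type*} [NormedRing A]
    [NormedAlgebra ℂ A] [CompleteSpace A] {c : A} (hc : spectrum ℂ c ⊆ slitPlane) :
    ∃ s : A, s * s = c ∧ ∀ z ∈ spectrum ℂ s, 0 < z.re := by
  let S := Algebra.elemental ℂ c
  let : NormedCommRing S := { SubringClass.toNormedRing S with mul_comm := mul_comm }
  let c' : S := ⟨c, Algebra.elemental.self_mem ℂ c⟩
  obtain ⟨s, hs, hspec⟩ := NormedCommRing.exists_mul_self_eq_of_spectrum_subset_slitPlane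
    (S.spectrum_subset_slitPlane (x := c') hc)
  exact ⟨s, congrArg Subtype.val hs, fun z hz => hspec z (spectrum.subset_subalgebra s hz)⟩

theorem notMem_spectrum_units_inv_mul_mul_units_inv {A : Type*} [Ring A] [Algebra ℂ A] (r : Aˣ)
    (b : A) {z : ℂ} (h : IsUnit (-z • ((r : A) * r) + b)) :
    z ∉ spectrum ℂ (↑r⁻¹ * b * ↑r⁻¹) := by
  have hconj : algebraMap ℂ A z - ↑r⁻¹ * b * ↑r⁻¹ = -(↑r⁻¹ * (-z • ((r : A) * r) + b) * ↑r⁻¹) := by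
    simp only [Algebra.algebraMap_eq_smul_one, mul_assoc, neg_smul, mul_add, mul_neg,
      Algebra.mul_smul_comm, Units.inv_mul_cancel_left, add_mul, neg_mul, Algebra.smul_mul_assoc,
      Units.mul_inv, neg_add_rev, neg_neg]
    abel
  rw [spectrum.notMem_iff, hconj]
  exact ((r⁻¹.isUnit.mul h).mul r⁻¹.isUnit).neg

theorem mul_mul_mul_units_inv_mul_mul_mul {M : Type*} [Monoid M] {a r : Mˣ} {b s : M}
    (hr : (r : M) * r = a) (hs : s * s = ↑r⁻¹ * b * ↑r⁻¹) :
    r * s * r * ↑a⁻¹ * (r * s * r) = b := by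
  obtain rfl : a = r * r := Units.ext hr.symm
  calc (r : M) * s * r * ↑(r * r)⁻¹ * (r * s * r) = r * (s * s) * r := by
        simp [mul_assoc]
    _ = b := by simp [hs, mul_assoc]

theorem stmt17_general {A : Type*} [NormedRing A] [NormedAlgebra ℂ A] [CompleteSpace A]
    (a b : Aˣ)
    (hinv : ∀ t : ℝ, 0 ≤ t → IsUnit ((t : ℂ) • (a : A) + (b : A)))
    (r : Aˣ) (hr2 : (r : A) * r = (a : A)) :
    (∀ x : ℝ, x ≤ 0 → (x : ℂ) ∉ spectrum ℂ ((↑r⁻¹ : A) * (b : A) * (↑r⁻¹ : A))) ∧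
    ∃ s : A, s * s = (↑r⁻¹ : A) * (b : A) * (↑r⁻¹ : A) ∧
      (∀ z ∈ spectrum ℂ s, 0 < z.re) ∧
      ((r : A) * s * (r : A)) * (↑a⁻¹ : A) * ((r : A) * s * (r : A)) = (b : A) := by
  have hspec : ∀ x : ℝ, x ≤ 0 → (x : ℂ) ∉ spectrum ℂ ((↑r⁻¹ : A) * b * ↑r⁻¹) := fun x hx =>
    notMem_spectrum_units_inv_mul_mul_units_inv r b
      (by simpa [hr2] using hinv (-x) (neg_nonneg.mpr hx))
  obtain ⟨s, hs, hs_re⟩ :=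
    exists_mul_self_eq_of_spectrum_subset_slitPlane (subset_slitPlane_iff.mpr hspec)
  exact ⟨hspec, s, hs, hs_re, mul_mul_mul_units_inv_mul_mul_mul hr2 hs⟩

/-- if a, b are strictly accretive invertible elements of a unital Banach
algebra (numerical ranges in the open right half-plane) with ta + b invertible for all
t ≥ 0, then Sp(a^{-1/2}·b·a^{-1/2}) contains no reals ≤ 0; moreover it has a square root
with spectrum in the open right half-plane, and G = a^{1/2}·(a^{-1/2}ba^{-1/2})^{1/2}·a^{1/2}
satisfies G·a⁻¹·G = b.  Here r is the principal square root of a. -/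
theorem stmt17 {A : Type*} [NormedRing A] [NormedAlgebra ℂ A] [CompleteSpace A] [NormOneClass A]
    (a b : Aˣ)
    (ha : ∀ f : A →L[ℂ] ℂ, ‖f‖ = 1 → f 1 = 1 → 0 < (f (a : A)).re)
    (hb : ∀ f : A →L[ℂ] ℂ, ‖f‖ = 1 → f 1 = 1 → 0 < (f (b : A)).re)
    (hinv : ∀ t : ℝ, 0 ≤ t → IsUnit ((t : ℂ) • (a : A) + (b : A)))
    (r : Aˣ) (hr2 : (r : A) * r = (a : A))
    (hrspec : ∀ z ∈ spectrum ℂ (r : A), 0 < z.re) :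
    (∀ x : ℝ, x ≤ 0 → (x : ℂ) ∉ spectrum ℂ ((↑r⁻¹ : A) * (b : A) * (↑r⁻¹ : A))) ∧
    ∃ s : A, s * s = (↑r⁻¹ : A) * (b : A) * (↑r⁻¹ : A) ∧
      (∀ z ∈ spectrum ℂ s, 0 < z.re) ∧
      ((r : A) * s * (r : A)) * (↑a⁻¹ : A) * ((r : A) * s * (r : A)) = (b : A) :=
  stmt17_general a b hinv r hr2
end
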